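/- Let Ω be a finite probability space, let Ŷ : Ω → [0,1] take finitely many values, and let S : Ω → {0,1} with P(S=0) > 0 and P(S=1) > 0. Then the following are equivalent: (i) Ŷ and S are independent; (ii) for every function a mapping values of Ŷ to {0,1}, P(a∘Ŷ = 0 | S=0) + P(a∘Ŷ = 1 | S=1) = 1. -/

import Mathlib

/-! Both conditions reduce to the equality of the two conditional laws of `Ŷ` given `S = 0` and
given `S = 1`. Since `S` is binary and both of its values have positive probability, the law of
total probability makes independence of an event `E` from `S` equivalent to
`P(E | S = 0) = P(E | S = 1)`. On the other side, `P(a∘Ŷ = 1 | S = 1) = 1 - P(a∘Ŷ = 0 | S = 1)`,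
so the balanced-accuracy identity for `a` says exactly that the event `a∘Ŷ = 0` has the same
conditional probability given either value of `S`. Every event `Ŷ ∈ A` is of this form, with
`a` the indicator of the complement of `A`. -/

open scoped Classical
noncomputable section

/-- Probability of an event under weight function `p` on a finite sample space. -/
def Pr {Omega : Type*} [Fintype Omega] (p : Omega → ℝ) (A : Omega → Prop) : ℝ :=
  ∑ ω, if A ω then p ω else 0

/-- Conditional probability `P(A | B)`. -/
def cPr {Omega : Type*} [Fintype Omega] (p : Omega → ℝ) (A B : Omega → Prop) : ℝ :=
  Pr p (fun ω => A ω ∧ B ω) / Pr p B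

lemma eq_add_mul_and_eq_add_mul_iff_div_eq_div {x₀ x₁ q₀ q₁ : ℝ} (hq : q₀ + q₁ = 1)
    (hq₀ : q₀ ≠ 0) (hq₁ : q₁ ≠ 0) :
    (x₀ = (x₀ + x₁) * q₀ ∧ x₁ = (x₀ + x₁) * q₁) ↔ x₀ / q₀ = x₁ / q₁ := by
  rw [div_eq_div_iff hq₀ hq₁]
  constructor
  · rintro ⟨h₀, -⟩
    linear_combination h₀ + x₀ * hq
  · intro h
    exact ⟨by linear_combination h - x₀ * hq, by linear_combination -h - x₁ * hq⟩

section Pr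

variable {Omega : Type*} [Fintype Omega] (p : Omega → ℝ)

lemma Pr_congr {A B : Omega → Prop} (h : ∀ ω, A ω ↔ B ω) : Pr p A = Pr p B :=
  Finset.sum_congr rfl fun ω _ => by simp only [h ω]

lemma Pr_and_comm (A B : Omega → Prop) :
    Pr p (fun ω => A ω ∧ B ω) = Pr p (fun ω => B ω ∧ A ω) :=
  Pr_congr p fun _ => and_comm

lemma Pr_and_eq_zero_add_Pr_and_eq_one (A : Omega → Prop) (f : Omega → Fin 2) :
    Pr p (fun ω => A ω ∧ f ω = 0) + Pr p (fun ω => A ω ∧ f ω = 1) = Pr p A := by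
  unfold Pr
  rw [← Finset.sum_add_distrib]
  refine Finset.sum_congr rfl fun ω _ => ?_
  rcases Fin.exists_fin_two.mp ⟨f ω, rfl⟩ with h | h <;> simp [h]

lemma Pr_eq_zero_add_Pr_eq_one (f : Omega → Fin 2) :
    Pr p (fun ω => f ω = 0) + Pr p (fun ω => f ω = 1) = ∑ ω, p ω := by
  calc _ = Pr p fun _ => True := by
        rw [← Pr_and_eq_zero_add_Pr_and_eq_one p (fun _ => True) f]; simp only [true_and]
    _ = ∑ ω, p ω := by simp [Pr]

lemma cPr_eq_one_eq_one_sub (f : Omega → Fin 2) (B : Omega → Prop) (hB : Pr p B ≠ 0) :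
    cPr p (fun ω => f ω = 1) B = 1 - cPr p (fun ω => f ω = 0) B := by
  unfold cPr
  rw [eq_sub_iff_add_eq, ← add_div, Pr_and_comm, Pr_and_comm p (fun ω => f ω = 0), add_comm,
    Pr_and_eq_zero_add_Pr_and_eq_one, div_self hB]

lemma cPr_add_cPr_eq_one_iff (f : Omega → Fin 2) (B₀ B₁ : Omega → Prop) (hB₁ : Pr p B₁ ≠ 0) :
    cPr p (fun ω => f ω = 0) B₀ + cPr p (fun ω => f ω = 1) B₁ = 1 ↔
      cPr p (fun ω => f ω = 0) B₀ = cPr p (fun ω => f ω = 0) B₁ := by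
  rw [cPr_eq_one_eq_one_sub p f B₁ hB₁]
  constructor <;> intro h <;> linarith

lemma forall_Pr_and_eq_mul_iff_cPr_eq (E : Omega → Prop) (S : Omega → Fin 2)
    (hS : Pr p (fun ω => S ω = 0) + Pr p (fun ω => S ω = 1) = 1)
    (hS₀ : Pr p (fun ω => S ω = 0) ≠ 0) (hS₁ : Pr p (fun ω => S ω = 1) ≠ 0) :
    (∀ s : Fin 2, Pr p (fun ω => E ω ∧ S ω = s) = Pr p E * Pr p (fun ω => S ω = s)) ↔
      cPr p E (fun ω => S ω = 0) = cPr p E (fun ω => S ω = 1) := by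
  rw [Fin.forall_fin_two, ← Pr_and_eq_zero_add_Pr_and_eq_one p E S]
  exact eq_add_mul_and_eq_add_mul_iff_div_eq_div hS hS₀ hS₁

end Pr

theorem stmt_5_general {Omega : Type*} [Fintype Omega] (p : Omega → ℝ)
    (hsum : ∑ ω, p ω = 1)
    (Yh : Omega → ℝ)
    (S : Omega → Fin 2)
    (hS0 : 0 < Pr p (fun ω => S ω = 0)) (hS1 : 0 < Pr p (fun ω => S ω = 1)) :
    (∀ (A : Set ℝ) (s : Fin 2),
        Pr p (fun ω => Yh ω ∈ A ∧ S ω = s)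
          = Pr p (fun ω => Yh ω ∈ A) * Pr p (fun ω => S ω = s))
    ↔
    (∀ a : ℝ → Fin 2,
        cPr p (fun ω => a (Yh ω) = 0) (fun ω => S ω = 0)
          + cPr p (fun ω => a (Yh ω) = 1) (fun ω => S ω = 1) = 1) := by
  have hS := (Pr_eq_zero_add_Pr_eq_one p S).trans hsum
  have indep_iff (E : Omega → Prop) := forall_Pr_and_eq_mul_iff_cPr_eq p E S hS hS0.ne' hS1.ne'
  constructor
  · intro hind a
    rw [cPr_add_cPr_eq_one_iff p _ _ _ hS1.ne']
    exact (indep_iff fun ω => a (Yh ω) = 0).1 (hind {x | a x = 0})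
  · intro hatt A
    refine (indep_iff fun ω => Yh ω ∈ A).2 ?_
    have hA : (fun ω => Yh ω ∈ A) = fun ω => (if Yh ω ∈ A then 0 else 1 : Fin 2) = 0 := by
      ext ω
      split_ifs <;> simp_all
    rw [hA, ← cPr_add_cPr_eq_one_iff p _ _ _ hS1.ne']
    exact hatt fun x => if x ∈ A then 0 else 1

theorem stmt_5 {Omega : Type*} [Fintype Omega] (p : Omega → ℝ)
    (hp : ∀ ω, 0 ≤ p ω) (hsum : ∑ ω, p ω = 1)
    (Yh : Omega → ℝ) (hYh : ∀ ω, Yh ω ∈ Set.Icc (0 : ℝ) 1)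
    (S : Omega → Fin 2)
    (hS0 : 0 < Pr p (fun ω => S ω = 0)) (hS1 : 0 < Pr p (fun ω => S ω = 1)) :
    (∀ (A : Set ℝ) (s : Fin 2),
        Pr p (fun ω => Yh ω ∈ A ∧ S ω = s)
          = Pr p (fun ω => Yh ω ∈ A) * Pr p (fun ω => S ω = s))
    ↔
    (∀ a : ℝ → Fin 2,
        cPr p (fun ω => a (Yh ω) = 0) (fun ω => S ω = 0)
          + cPr p (fun ω => a (Yh ω) = 1) (fun ω => S ω = 1) = 1) :=
  stmt_5_general p hsum Yh S hS0 hS1
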